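/- arXiv:1505.03896 — 2 statements merged into one kernel-verified Lean document; each statement's English description precedes it below -/
import Mathlib

section
/- Let B be a ring, n a positive natural number, and Q a left B-module such that B, viewed as a left module over itself, is isomorphic to the direct sum of n copies of Q. Let E := End_B(Q)^op be the opposite ring of the endomorphism ring of Q. Then B and E are Morita equivalent: there is an equivalence between the category of left E-modules and the category of left B-modules. -/
/-!
Right multiplication identifies `B` with `End_B(B)ᵐᵒᵖ`, and `B ≅ Qⁿ` turns this into
`End_B(Qⁿ)ᵐᵒᵖ ≅ Mₙ(End_B(Q))ᵐᵒᵖ ≅ Mₙ(End_B(Q)ᵐᵒᵖ)` (transposition). So `B` is a matrix ring over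
`E`, and a ring is Morita equivalent to its matrix rings of positive size.
-/

def LinearEquiv.ringEquivMatrixEndMulOpposite {B Q ι : Type*} [Ring B] [AddCommGroup Q]
    [Module B Q] [Fintype ι] [DecidableEq ι] (e : B ≃ₗ[B] (ι → Q)) :
    B ≃+* Matrix ι ι (Module.End B Q)ᵐᵒᵖ :=
  .trans (.opOp B) <| .trans (.op <| .trans (.moduleEndSelf B) <|
    .trans e.conjRingEquiv (endVecRingEquivMatrixEnd ..)) (.symm .mopMatrix)

/-- Modular Skryabin equivalence, abstract form: if `B`, as a left module over itself,
is isomorphic to a direct sum of `n > 0` copies of a `B`-module `Q`, then `B` is Morita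
equivalent to `E = End_B(Q)ᵒᵖ`: the categories of left `E`-modules and of left
`B`-modules are equivalent. -/
theorem morita_equivalence_of_free_decomposition (B Q : Type u) [Ring B]
    [AddCommGroup Q] [Module B Q] (n : ℕ) (hn : 0 < n)
    (e : B ≃ₗ[B] (Fin n → Q)) :
    Nonempty (ModuleCat.{u} (Module.End B Q)ᵐᵒᵖ ≌ ModuleCat.{u} B) :=
  ⟨(ModuleCat.matrixEquivalence _ ⟨0, hn⟩).trans
    (ModuleCat.restrictScalarsEquivalenceOfRingEquiv e.ringEquivMatrixEndMulOpposite)⟩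
end

section
/- Let B be a ring, n a positive natural number, and Q a left B-module such that B, viewed as a left module over itself, is isomorphic to the direct sum of n copies of Q. Let E := End_B(Q)^op, so that Q is a right E-module via q · f := f(q) for f ∈ End_B(Q). Then Q is a free right E-module of rank n, i.e. Q is isomorphic as a right E-module to the direct sum of n copies of E. -/
/-- `M ≅ Hom_B(B, M) ≅ Hom_B(Qⁱ, M) ≅ Hom_B(Q, M)ⁱ`; every step commutes with post-composition
by the `S`-action on `M`. -/
noncomputable def LinearEquiv.piLinearMapOfSelfEquivPi {B S Q M ι : Type*}
    [Semiring B] [Semiring S] [AddCommMonoid Q] [Module B Q] [AddCommMonoid M] [Module B M]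
    [Module S M] [SMulCommClass B S M] [Fintype ι] [DecidableEq ι] (e : B ≃ₗ[B] (ι → Q)) :
    M ≃ₗ[S] (ι → (Q →ₗ[B] M)) :=
  (LinearMap.ringLmapEquivSelf B S M).symm ≪≫ₗ LinearEquiv.congrLeft M S e ≪≫ₗ
    (LinearMap.lsum B (fun _ : ι => Q) S).symm

/- A right `End_B(Q)ᵒᵖ`-module is a left `End_B(Q)`-module; the action `q · f = f q` becomes the
tautological action on `Q`, and the regular module `End_B(Q) = Q →ₗ[B] Q` is acted on by
post-composition, which is the case `M = Q`, `S = End_B(Q)` above. -/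
theorem free_of_rank_n_over_endomorphism_ring_general (B : Type*) [Ring B]
    (Q : Type*) [AddCommGroup Q] [Module B Q] (n : ℕ)
    (e : B ≃ₗ[B] (Fin n → Q)) :
    Nonempty (Q ≃ₗ[Module.End B Q] (Fin n → Module.End B Q)) :=
  ⟨LinearEquiv.piLinearMapOfSelfEquivPi e⟩

/-- If `B`, as a left module over itself, is isomorphic to a direct sum of `n > 0`
copies of a `B`-module `Q`, then `Q` is a free right module of rank `n` over
`E = End_B(Q)ᵒᵖ` (the right `E`-action being `q · f := f q`).

A right `E`-module is the same thing as a left `Eᵐᵒᵖ = End_B(Q)`-module; under this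
identification the right `E`-action `q · f = f q` on `Q` is the tautological left
action of `End_B(Q)` on `Q` (`Module.End.applyModule`), and the right regular
`E`-module `E` is the left regular `End_B(Q)`-module. So the statement reads:
`Q ≅ (End_B(Q))^n` as left `End_B(Q)`-modules. -/
theorem free_of_rank_n_over_endomorphism_ring (B : Type*) [Ring B]
    (Q : Type*) [AddCommGroup Q] [Module B Q] (n : ℕ) (hn : 0 < n)
    (e : B ≃ₗ[B] (Fin n → Q)) :
    Nonempty (Q ≃ₗ[Module.End B Q] (Fin n → Module.End B Q)) :=
  free_of_rank_n_over_endomorphism_ring_general B Q n e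
end
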